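/- arXiv:1507.04123 — 2 statements merged into one kernel-verified Lean document; each statement's English description precedes it below -/
import Mathlib

section
/- For every k ≥ 0, Ψ([k,x;k+1]_q) = −1/([k+1]_q [k+2]_q), where [k,x;k+1]_q = (1/[k+1]!_q)·x·∏_{t=1}^{k}([t]_q + qᵗx). -/
/-!
Extending the recurrence by linearity, `q Ψ(p(qx + 1)) − Ψ(p) = p'(0) + (q − 1) p(0)` for every
polynomial `p`. The substitution `x ↦ qx + 1` turns each factor `[s]_q + q^s x` into
`[s+1]_q + q^{s+1} x`, so with `P_k = ∏_{t=1}^{k} ([t]_q + q^t x)` it sends `x P_k` to `P_{k+1}`,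
and the functional equation gives `q Ψ(P_{k+1}) − Ψ(x P_k) = [k]!_q`. Splitting off the last
factor of `P_{k+1}` gives a second linear relation between `Ψ(P_k)`, `Ψ(x P_k)` and `Ψ(P_{k+1})`;
by induction `Ψ(P_k) = [k]!_q / [k+1]_q` and `Ψ(x P_k) = −[k]!_q / [k+2]_q`. Finally
`[k, x; k+1]_q = x P_k / [k+1]!_q`.
-/

open Finset Polynomial PowerSeries

noncomputable section

/-- The variable `q`, viewed as a rational function over `ℚ`. -/
def qv : RatFunc ℚ := RatFunc.X

/-- The Carlitz q-Bernoulli numbers: `β 0 = 1` together with the umbral recurrence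
`q·(qβ+1)^n − β_n = [n = 1]` for `n ≥ 1`, where after binomial expansion the powers
`β^k` are replaced by `β k`. -/
def IsCarlitz (β : ℕ → RatFunc ℚ) : Prop :=
  β 0 = 1 ∧ ∀ n : ℕ, 1 ≤ n →
    qv * (∑ k ∈ Finset.range (n + 1), (n.choose k : RatFunc ℚ) * qv ^ k * β k) - β n
      = if n = 1 then 1 else 0

/-- The q-integer `[m]_q = (q^m − 1)/(q − 1)`, for `m : ℤ`. -/
def qint (m : ℤ) : RatFunc ℚ := (qv ^ m - 1) / (qv - 1)

/-- The q-factorial `[n]!_q`. -/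
def qfact (n : ℕ) : RatFunc ℚ := ∏ t ∈ Finset.range n, qint (t + 1)

/-- The Gaussian binomial coefficient. -/
def qbinom (n k : ℕ) : RatFunc ℚ := qfact n / (qfact k * qfact (n - k))

/-- The linear functional `Ψ` on polynomials in `x`, sending `xⁿ` to `β n`. -/
def Psi (β : ℕ → RatFunc ℚ) (p : Polynomial (RatFunc ℚ)) : RatFunc ℚ :=
  p.sum fun n a => a * β n

/-- The q-binomial polynomial
`[i, x; d]_q = (1/[d]!_q) ∏_{t=1}^{d} ([i−d+t]_q + q^{i−d+t} x)`. -/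
def qbase (i d : ℕ) : Polynomial (RatFunc ℚ) :=
  Polynomial.C (qfact d)⁻¹ *
    ∏ t ∈ Finset.Icc 1 d,
      (Polynomial.C (qint ((i : ℤ) - d + t)) +
        Polynomial.C (qv ^ ((i : ℤ) - d + t)) * Polynomial.X)

lemma qv_ne_zero : qv ≠ 0 := RatFunc.X_ne_zero

lemma qv_pow_ne_one {n : ℕ} (hn : n ≠ 0) : qv ^ n ≠ 1 := by
  intro h
  rw [qv, ← RatFunc.algebraMap_X, ← map_pow, ← map_one (algebraMap ℚ[X] (RatFunc ℚ))] at h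
  have := congrArg natDegree (RatFunc.algebraMap_injective ℚ h)
  simp [hn] at this

lemma qv_sub_one_ne_zero : qv - 1 ≠ 0 := by
  simpa [sub_ne_zero] using qv_pow_ne_one one_ne_zero

lemma qint_natCast (n : ℕ) : qint n = (qv ^ n - 1) / (qv - 1) := by
  rw [qint, zpow_natCast]

lemma qint_natCast_ne_zero {n : ℕ} (hn : n ≠ 0) : qint n ≠ 0 := by
  rw [qint_natCast]
  exact div_ne_zero (sub_ne_zero.2 (qv_pow_ne_one hn)) qv_sub_one_ne_zero

lemma qint_mul_sub_one (m : ℤ) : qint m * (qv - 1) = qv ^ m - 1 :=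
  div_mul_cancel₀ _ qv_sub_one_ne_zero

lemma qint_zero : qint 0 = 0 := by simp [qint]

lemma qint_one : qint 1 = 1 := by simp [qint, qv_sub_one_ne_zero]

lemma qint_add_one (m : ℤ) : qint (m + 1) = qint m + qv ^ m := by
  rw [qint, qint, zpow_add_one₀ qv_ne_zero]
  field_simp [qv_sub_one_ne_zero]
  ring

lemma qfact_succ (n : ℕ) : qfact (n + 1) = qfact n * qint (n + 1) :=
  prod_range_succ _ n

lemma qfact_ne_zero (n : ℕ) : qfact n ≠ 0 :=
  prod_ne_zero_iff.2 fun t _ => by exact_mod_cast qint_natCast_ne_zero t.succ_ne_zero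

section Psi

variable (β : ℕ → RatFunc ℚ)

lemma Psi_eq_lsum : Psi β = Polynomial.lsum fun n => LinearMap.mulRight (RatFunc ℚ) (β n) := rfl

lemma Psi_add (p r : (RatFunc ℚ)[X]) : Psi β (p + r) = Psi β p + Psi β r := by
  simp only [Psi_eq_lsum, map_add]

lemma Psi_C_mul (a : RatFunc ℚ) (p : (RatFunc ℚ)[X]) :
    Psi β (Polynomial.C a * p) = a * Psi β p := by
  rw [Psi_eq_lsum, C_mul', map_smul, smul_eq_mul]

lemma Psi_sum {ι : Type*} (s : Finset ι) (f : ι → (RatFunc ℚ)[X]) :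
    Psi β (∑ i ∈ s, f i) = ∑ i ∈ s, Psi β (f i) := by
  simp only [Psi_eq_lsum, map_sum]

lemma Psi_monomial (n : ℕ) (a : RatFunc ℚ) : Psi β (monomial n a) = a * β n :=
  sum_monomial_index a _ (zero_mul _)

lemma Psi_X_pow (n : ℕ) : Psi β (Polynomial.X ^ n) = β n := by
  rw [X_pow_eq_monomial, Psi_monomial, one_mul]

lemma Psi_one : Psi β 1 = β 0 := by
  simpa using Psi_X_pow β 0

lemma Psi_qX_add_one_pow (n : ℕ) :
    Psi β ((Polynomial.C qv * Polynomial.X + 1) ^ n)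
      = ∑ k ∈ range (n + 1), (n.choose k : RatFunc ℚ) * qv ^ k * β k := by
  rw [add_pow, Psi_sum]
  refine sum_congr rfl fun k _ => ?_
  rw [one_pow, mul_one, mul_pow, ← C_pow, ← C_eq_natCast, mul_comm, ← mul_assoc, ← C_mul,
    C_mul_X_pow_eq_monomial, Psi_monomial, mul_comm (n.choose k : RatFunc ℚ)]

end Psi

-- `P_k` of the outline is `qrise 1 k`, and `x P_k` is `qrise 0 (k + 1)`.
def qfactor (s : ℤ) : (RatFunc ℚ)[X] :=
  Polynomial.C (qint s) + Polynomial.C (qv ^ s) * Polynomial.X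

def qrise (a : ℤ) (n : ℕ) : (RatFunc ℚ)[X] := ∏ t ∈ range n, qfactor (t + a)

lemma qfactor_zero : qfactor 0 = Polynomial.X := by
  simp [qfactor, qint_zero]

lemma qfactor_comp (s : ℤ) :
    (qfactor s).comp (Polynomial.C qv * Polynomial.X + 1) = qfactor (s + 1) := by
  simp only [qfactor, add_comp, mul_comp, C_comp, X_comp, qint_add_one,
    zpow_add_one₀ qv_ne_zero, C_add, C_mul]
  ring

lemma qrise_comp (a : ℤ) (n : ℕ) :
    (qrise a n).comp (Polynomial.C qv * Polynomial.X + 1) = qrise (a + 1) n := by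
  simp only [qrise, Polynomial.prod_comp, qfactor_comp, add_assoc]

lemma qrise_succ (a : ℤ) (n : ℕ) : qrise a (n + 1) = qrise a n * qfactor (n + a) := by
  rw [qrise, prod_range_succ, qrise]

lemma qrise_zero_succ (n : ℕ) : qrise 0 (n + 1) = Polynomial.X * qrise 1 n := by
  simp only [qrise, prod_range_succ', Nat.cast_zero, qfactor_zero, Nat.cast_succ,
    add_zero, mul_comm]

lemma coeff_zero_qrise_one (n : ℕ) : (qrise 1 n).coeff 0 = qfact n := by
  rw [coeff_zero_eq_eval_zero, qrise, eval_prod, qfact]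
  refine prod_congr rfl fun t _ => ?_
  simp [qfactor]

lemma Psi_qrise_one_succ (β : ℕ → RatFunc ℚ) (n : ℕ) :
    Psi β (qrise 1 (n + 1))
      = qint (n + 1) * Psi β (qrise 1 n)
        + qv ^ ((n : ℤ) + 1) * Psi β (Polynomial.X * qrise 1 n) := by
  rw [qrise_succ, qfactor, mul_add, mul_comm, ← mul_assoc, mul_comm _ (Polynomial.C _), mul_assoc,
    Psi_add, Psi_C_mul, Psi_C_mul, mul_comm Polynomial.X]

section Carlitz

variable {β : ℕ → RatFunc ℚ}

lemma IsCarlitz.Psi_comp_X_pow (h : IsCarlitz β) (n : ℕ) :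
    qv * Psi β ((Polynomial.X ^ n).comp (Polynomial.C qv * Polynomial.X + 1))
        - Psi β (Polynomial.X ^ n)
      = (Polynomial.X ^ n : (RatFunc ℚ)[X]).coeff 1
        + (qv - 1) * (Polynomial.X ^ n : (RatFunc ℚ)[X]).coeff 0 := by
  rw [X_pow_comp, Psi_qX_add_one_pow, Psi_X_pow, Polynomial.coeff_X_pow, Polynomial.coeff_X_pow]
  rcases Nat.eq_zero_or_pos n with rfl | hn
  · simp [h.1]
  · simp only [h.2 n hn, eq_comm (a := 1), if_neg hn.ne, mul_zero, add_zero]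

lemma IsCarlitz.Psi_comp (h : IsCarlitz β) (p : (RatFunc ℚ)[X]) :
    qv * Psi β (p.comp (Polynomial.C qv * Polynomial.X + 1)) - Psi β p
      = p.coeff 1 + (qv - 1) * p.coeff 0 := by
  induction p using Polynomial.induction_on' with
  | add p r hp hr =>
    rw [add_comp, Psi_add, Psi_add, coeff_add, coeff_add]
    linear_combination hp + hr
  | monomial n a =>
    rw [← C_mul_X_pow_eq_monomial, mul_comp, C_comp, Psi_C_mul, Psi_C_mul, Polynomial.coeff_C_mul,
      Polynomial.coeff_C_mul]
    linear_combination a * h.Psi_comp_X_pow n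

lemma IsCarlitz.Psi_qrise_one_succ_sub (h : IsCarlitz β) (n : ℕ) :
    qv * Psi β (qrise 1 (n + 1)) - Psi β (Polynomial.X * qrise 1 n) = qfact n := by
  have := h.Psi_comp (qrise 0 (n + 1))
  rwa [qrise_comp, zero_add, qrise_zero_succ, coeff_X_mul_zero, mul_zero, add_zero,
    Polynomial.coeff_X_mul, coeff_zero_qrise_one] at this

lemma IsCarlitz.Psi_X_mul_qrise_one_of (h : IsCarlitz β) {n : ℕ}
    (hn : Psi β (qrise 1 n) = qfact n / qint (n + 1)) :
    Psi β (Polynomial.X * qrise 1 n) = -qfact n / qint (n + 2) := by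
  have hfe := h.Psi_qrise_one_succ_sub n
  have hint1 : qint (n + 1) ≠ 0 := by exact_mod_cast qint_natCast_ne_zero n.succ_ne_zero
  rw [Psi_qrise_one_succ, hn, mul_div_cancel₀ _ hint1] at hfe
  have hgeom : qint (n + 2) * (qv - 1) = qv ^ ((n : ℤ) + 1) * qv - 1 := by
    rw [qint_mul_sub_one, ← zpow_add_one₀ qv_ne_zero, add_assoc, one_add_one_eq_two]
  rw [eq_div_iff (by exact_mod_cast qint_natCast_ne_zero (n + 1).succ_ne_zero)]
  refine mul_left_cancel₀ qv_sub_one_ne_zero ?_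
  linear_combination hfe + Psi β (Polynomial.X * qrise 1 n) * hgeom

lemma IsCarlitz.Psi_qrise_one (h : IsCarlitz β) (n : ℕ) :
    Psi β (qrise 1 n) = qfact n / qint (n + 1) := by
  induction n with
  | zero => simp [qrise, qfact, Psi_one, h.1, qint_one]
  | succ n ih =>
    have hint1 : qint (n + 1) ≠ 0 := by exact_mod_cast qint_natCast_ne_zero n.succ_ne_zero
    have hint2 : qint (n + 2) ≠ 0 := by exact_mod_cast qint_natCast_ne_zero (n + 1).succ_ne_zero
    have hsucc : qint (n + 2) = qint (n + 1) + qv ^ ((n : ℤ) + 1) := by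
      rw [← qint_add_one, add_assoc, one_add_one_eq_two]
    rw [Psi_qrise_one_succ, h.Psi_X_mul_qrise_one_of ih, ih, qfact_succ, Nat.cast_succ, add_assoc,
      one_add_one_eq_two]
    field_simp
    rw [hsucc]
    ring

lemma IsCarlitz.Psi_X_mul_qrise_one (h : IsCarlitz β) (n : ℕ) :
    Psi β (Polynomial.X * qrise 1 n) = -qfact n / qint (n + 2) :=
  h.Psi_X_mul_qrise_one_of (h.Psi_qrise_one n)

end Carlitz

lemma qbase_eq (i d : ℕ) : qbase i d = Polynomial.C (qfact d)⁻¹ * qrise (i - d + 1) d := by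
  rw [qbase, qrise, ← Finset.Ico_add_one_right_eq_Icc, range_eq_Ico, ← prod_Ico_add' _ 0 d 1]
  refine congrArg _ (prod_congr rfl fun t _ => ?_)
  rw [← qfactor]
  push_cast
  ring_nf

theorem psi_qbase_subdiag (β : ℕ → RatFunc ℚ) (h : IsCarlitz β) (k : ℕ) :
    Psi β (qbase k (k + 1)) = -1 / (qint (k + 1) * qint (k + 2)) := by
  have hbase : (k : ℤ) - (k + 1 : ℕ) + 1 = 0 := by push_cast; ring
  rw [qbase_eq, hbase, qrise_zero_succ, Psi_C_mul, h.Psi_X_mul_qrise_one, qfact_succ]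
  have hfact := qfact_ne_zero k
  field_simp
end
end

section
/- The Carlitz q-Bernoulli polynomials satisfy βₙ(z) = (1/(q−1)ⁿ) Σ_{k=0}^{n} C(n,k)(−1)^{n−k} ((k+1)/[k+1]_q)(1+(q−1)z)ᵏ. -/
open Finset Polynomial PowerSeries

noncomputable section

/-- The Carlitz q-Bernoulli polynomial `βₙ(z) = Ψ((z + (z(q−1)+1)x)ⁿ)`,
expanded as a polynomial in `z` (the variable `X`). -/
def Bpoly (β : ℕ → RatFunc ℚ) (n : ℕ) : Polynomial (RatFunc ℚ) :=
  ∑ k ∈ Finset.range (n + 1),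
    Polynomial.C ((n.choose k : RatFunc ℚ) * β k) *
      (Polynomial.C (qv - 1) * Polynomial.X + 1) ^ k * Polynomial.X ^ (n - k)

/-!
The recurrence determines the `β n` uniquely, since `β n` enters the `n`-th equation with
coefficient `q^(n+1) - 1 ≠ 0`. Let `Ψ_w` be the functional sending `x^j` to
`w_j = (j+1)/[j+1]_q`. The numbers `Ψ_w((x - 1)^m)/(q - 1)^m` satisfy the recurrence: umbrally
`β = (x - 1)/(q - 1)`, so `q(qβ + 1)^n - β^n` becomes `Ψ_w(q(qx - 1)^n - (x - 1)^n)/(q - 1)^n`,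
and `w_j (q^(j+1) - 1) = (j+1)(q - 1)` reduces this to `(q - 1)^(1-n) ∑ C(n,j)(-1)^(n-j)(j+1)`,
the `n`-th forward difference of a linear function. The same substitution turns
`βₙ(z) = Ψ((z + (1 + (q-1)z)x)^n)` into `Ψ_w(((1 + (q-1)z)x - 1)^n)/(q - 1)^n`, which expands
to the formula.
-/

open fwdDiff in
lemma sum_choose_mul_neg_one_pow_mul_succ {R : Type*} [CommRing R] {n : ℕ} (hn : n ≠ 0) :
    ∑ j ∈ range (n + 1), (n.choose j : R) * (-1) ^ (n - j) * (j + 1)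
      = if n = 1 then 1 else 0 := by
  obtain ⟨m, rfl⟩ := Nat.exists_eq_add_one_of_ne_zero hn
  have hΔ : Δ_[1] (fun r : R => r + 1) = fun _ => 1 := by
    ext r; simp [fwdDiff]
  calc _ = ∑ j ∈ range (m + 1 + 1),
        ((-1 : ℤ) ^ (m + 1 - j) * (m + 1).choose j) • ((0 : R) + j • 1 + 1) :=
        sum_congr rfl fun j _ => by rw [zsmul_eq_mul]; push_cast; ring
    _ = (Δ_[1])^[m + 1] (fun r : R => r + 1) 0 :=
        (fwdDiff_iter_eq_sum_shift (1 : R) (fun r : R => r + 1) (m + 1) 0).symm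
    _ = (Δ_[1])^[m] (fun _ : R => (1 : R)) 0 := by rw [Function.iterate_succ_apply, hΔ]
    _ = _ := by
      cases m with
      | zero => simp
      | succ m =>
        rw [Function.iterate_succ_apply, fwdDiff_const,
          Function.iterate_fixed (fwdDiff_const _ _)]
        simp

def psiLinear (c : ℕ → RatFunc ℚ) : (RatFunc ℚ)[X] →ₗ[RatFunc ℚ] RatFunc ℚ :=
  lsum fun n => LinearMap.mulRight (RatFunc ℚ) (c n)

lemma psiLinear_apply (c : ℕ → RatFunc ℚ) (p : (RatFunc ℚ)[X]) : psiLinear c p = Psi c p :=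
  rfl

lemma Psi_X_pow_s14 (c : ℕ → RatFunc ℚ) (k : ℕ) : Psi c (Polynomial.X ^ k) = c k := by
  rw [Psi, X_pow_eq_monomial, sum_monomial_index 1 _ (zero_mul (c k)), one_mul]

lemma Psi_C_mul_add_C_pow (c : ℕ → RatFunc ℚ) (a b : RatFunc ℚ) (p : (RatFunc ℚ)[X])
    (n : ℕ) :
    Psi c ((Polynomial.C a * p + Polynomial.C b) ^ n)
      = ∑ k ∈ range (n + 1), n.choose k * a ^ k * b ^ (n - k) * Psi c (p ^ k) := by
  rw [← psiLinear_apply, add_pow, map_sum]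
  refine sum_congr rfl fun k _ => ?_
  have hterm : (Polynomial.C a * p) ^ k * Polynomial.C b ^ (n - k) * (n.choose k : (RatFunc ℚ)[X])
      = (n.choose k * a ^ k * b ^ (n - k) : RatFunc ℚ) • p ^ k := by
    rw [Polynomial.smul_eq_C_mul]
    simp only [map_mul, map_pow, map_natCast]
    ring
  rw [hterm, map_smul, smul_eq_mul, psiLinear_apply]

lemma Psi_C_mul_X_add_C_pow (c : ℕ → RatFunc ℚ) (a b : RatFunc ℚ) (n : ℕ) :
    Psi c ((Polynomial.C a * Polynomial.X + Polynomial.C b) ^ n)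
      = ∑ k ∈ range (n + 1), n.choose k * a ^ k * b ^ (n - k) * c k := by
  simp only [Psi_C_mul_add_C_pow, Psi_X_pow_s14]

lemma qv_pow_sub_one_ne_zero {m : ℕ} (hm : m ≠ 0) : qv ^ m - 1 ≠ 0 := by
  have : qv ^ m - 1 = algebraMap ℚ[X] (RatFunc ℚ) (Polynomial.X ^ m - Polynomial.C 1) := by
    simp [qv, ← RatFunc.algebraMap_X]
  rw [this]
  exact RatFunc.algebraMap_ne_zero (X_pow_sub_C_ne_zero (Nat.pos_of_ne_zero hm) 1)

lemma qint_natCast_add_one (j : ℕ) : qint (j + 1) = (qv ^ (j + 1) - 1) / (qv - 1) := by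
  rw [qint, ← zpow_natCast]
  push_cast
  rfl

def carlitzWeight (j : ℕ) : RatFunc ℚ := ((j : RatFunc ℚ) + 1) / qint (j + 1)

lemma carlitzWeight_zero : carlitzWeight 0 = 1 := by
  simp [carlitzWeight, qint_one]

lemma carlitzWeight_mul (j : ℕ) : carlitzWeight j * (qv ^ (j + 1) - 1) = (j + 1) * (qv - 1) := by
  rw [carlitzWeight, qint_natCast_add_one, div_div_eq_mul_div,
    div_mul_cancel₀ _ (qv_pow_sub_one_ne_zero j.succ_ne_zero)]

def carlitzBernoulli (m : ℕ) : RatFunc ℚ :=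
  Psi carlitzWeight ((Polynomial.X - 1) ^ m) / (qv - 1) ^ m

lemma carlitzBernoulli_eq_sum (m : ℕ) :
    carlitzBernoulli m
      = (∑ j ∈ range (m + 1), m.choose j * (-1) ^ (m - j) * carlitzWeight j)
        / (qv - 1) ^ m := by
  rw [carlitzBernoulli, show (Polynomial.X - 1 : (RatFunc ℚ)[X])
    = Polynomial.C 1 * Polynomial.X + Polynomial.C (-1) by simp; ring, Psi_C_mul_X_add_C_pow]
  simp only [one_pow, mul_one]

lemma sum_choose_mul_pow_mul_carlitzBernoulli (n : ℕ) (u y : RatFunc ℚ) :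
    ∑ k ∈ range (n + 1), n.choose k * u ^ k * y ^ (n - k) * carlitzBernoulli k
      = Psi carlitzWeight ((Polynomial.C u * Polynomial.X
          + Polynomial.C ((qv - 1) * y - u)) ^ n) / (qv - 1) ^ n := by
  rw [show Polynomial.C u * Polynomial.X + Polynomial.C ((qv - 1) * y - u)
    = Polynomial.C u * (Polynomial.X - 1) + Polynomial.C ((qv - 1) * y) by simp; ring,
    Psi_C_mul_add_C_pow, sum_div]
  refine sum_congr rfl fun k hk => ?_
  have hq : qv - 1 ≠ 0 := qv_sub_one_ne_zero
  rw [carlitzBernoulli, ← pow_mul_pow_sub _ (Nat.lt_succ_iff.mp (mem_range.mp hk)), mul_pow]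
  field_simp

lemma carlitzBernoulli_recurrence {n : ℕ} (hn : 1 ≤ n) :
    qv * (∑ k ∈ range (n + 1), (n.choose k : RatFunc ℚ) * qv ^ k * carlitzBernoulli k)
      - carlitzBernoulli n = if n = 1 then 1 else 0 := by
  have hsum := sum_choose_mul_pow_mul_carlitzBernoulli n qv 1
  rw [show (qv - 1) * 1 - qv = -1 by ring, Psi_C_mul_X_add_C_pow] at hsum
  simp only [one_pow, mul_one] at hsum
  rw [hsum, carlitzBernoulli_eq_sum, mul_div_assoc', div_sub_div_same, mul_sum, ← sum_sub_distrib]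
  have hterm : ∀ j, qv * (n.choose j * qv ^ j * (-1) ^ (n - j) * carlitzWeight j)
      - n.choose j * (-1) ^ (n - j) * carlitzWeight j
      = (qv - 1) * (n.choose j * (-1) ^ (n - j) * (j + 1)) := fun j => by
    linear_combination (n.choose j * (-1) ^ (n - j) : RatFunc ℚ) * carlitzWeight_mul j
  rw [sum_congr rfl fun j _ => hterm j, ← mul_sum,
    sum_choose_mul_neg_one_pow_mul_succ (Nat.one_le_iff_ne_zero.mp hn)]
  split_ifs with h1
  · subst h1
    simp [div_self qv_sub_one_ne_zero]
  · simp

lemma isCarlitz_carlitzBernoulli : IsCarlitz carlitzBernoulli :=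
  ⟨by simpa [carlitzBernoulli, carlitzWeight_zero] using Psi_X_pow_s14 carlitzWeight 0,
    fun _ hn => carlitzBernoulli_recurrence hn⟩

lemma IsCarlitz.unique {β γ : ℕ → RatFunc ℚ} (hβ : IsCarlitz β) (hγ : IsCarlitz γ) :
    β = γ := by
  funext n
  induction n using Nat.strong_induction_on with
  | _ n ih =>
  rcases Nat.eq_zero_or_pos n with rfl | hn
  · rw [hβ.1, hγ.1]
  have hdiff := (hβ.2 n hn).trans (hγ.2 n hn).symm
  rw [sum_range_succ, sum_range_succ, Nat.choose_self,
    sum_congr rfl fun k hk => by rw [ih k (mem_range.mp hk)]] at hdiff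
  have hmul : (qv ^ (n + 1) - 1) * (β n - γ n) = 0 := by linear_combination hdiff
  exact sub_eq_zero.mp ((mul_eq_zero.mp hmul).resolve_left (qv_pow_sub_one_ne_zero n.succ_ne_zero))

lemma eval_Bpoly (β : ℕ → RatFunc ℚ) (n : ℕ) (z : RatFunc ℚ) :
    (Bpoly β n).eval z
      = ∑ k ∈ range (n + 1), n.choose k * (1 + (qv - 1) * z) ^ k * z ^ (n - k) * β k := by
  rw [Bpoly, eval_finsetSum]
  refine sum_congr rfl fun k _ => ?_
  simp only [eval_mul, eval_pow, eval_add, eval_one, eval_C, eval_X]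
  ring

/-- Carlitz's formula (5.3):
`βₙ(z) = (1/(q−1)ⁿ) Σₖ C(n,k)(−1)^{n−k}((k+1)/[k+1]_q)(1+(q−1)z)ᵏ`. -/
theorem carlitz_poly_formula (β : ℕ → RatFunc ℚ) (h : IsCarlitz β) (n : ℕ)
    (z : RatFunc ℚ) :
    (Bpoly β n).eval z
      = (1 / (qv - 1) ^ n) *
        ∑ k ∈ Finset.range (n + 1),
          (n.choose k : RatFunc ℚ) * (-1) ^ (n - k) *
            (((k : RatFunc ℚ) + 1) / qint (k + 1)) * (1 + (qv - 1) * z) ^ k := by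
  obtain rfl := h.unique isCarlitz_carlitzBernoulli
  rw [eval_Bpoly, sum_choose_mul_pow_mul_carlitzBernoulli,
    show (qv - 1) * z - (1 + (qv - 1) * z) = -1 by ring, Psi_C_mul_X_add_C_pow, one_div_mul_eq_div]
  congr 1
  exact sum_congr rfl fun k _ => by rw [carlitzWeight]; ring
end
end
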